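/- arXiv:2412.12172 — 3 statements merged into one kernel-verified Lean document; each statement's English description precedes it below -/
import Mathlib

section
/- For z_0 ∈ D with z_0 ≠ 0, let β_{z_0}(z) = ((z_0 − z)/(1 − conj(z_0) z))·(|z_0|/z_0). Then for every r with 0 ≤ r < 1 and every z with |z| ≤ r, one has |1 − β_{z_0}(z)| ≤ ((1+r)/(1−r))·(1 − |z_0|). -/
/-!
Clearing denominators gives
`1 - β_{z₀}(z) = (1 - |z₀|) (z₀ + |z₀| z) / (z₀ (1 - z̄₀ z))`.
The middle factor has modulus at most `|z₀| (1 + |z|)` and `|1 - z̄₀ z| ≥ 1 - |z|`, so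
`|1 - β_{z₀}(z)| ≤ (1 + |z|) / (1 - |z|) · (1 - |z₀|)`, which is increasing in `|z|`.
-/

open ComplexConjugate

noncomputable def blaschkeFactor (z₀ z : ℂ) : ℂ :=
  (z₀ - z) / (1 - conj z₀ * z) * ((‖z₀‖ : ℂ) / z₀)

theorem one_sub_conj_mul_ne_zero {z₀ z : ℂ} (hz₀ : ‖z₀‖ ≤ 1) (hz : ‖z‖ < 1) :
    1 - conj z₀ * z ≠ 0 := by
  rw [sub_ne_zero, ne_comm]
  refine ne_of_apply_ne norm (ne_of_lt ?_)
  rw [norm_mul, Complex.norm_conj, norm_one]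
  nlinarith [norm_nonneg z, norm_nonneg z₀]

theorem one_sub_blaschkeFactor_eq {z₀ z : ℂ} (hz₀ : z₀ ≠ 0) (hden : 1 - conj z₀ * z ≠ 0) :
    1 - blaschkeFactor z₀ z =
      (1 - ‖z₀‖) * (z₀ + ‖z₀‖ * z) / (z₀ * (1 - conj z₀ * z)) := by
  have hsq : z₀ * conj z₀ = (‖z₀‖ : ℂ) ^ 2 := Complex.mul_conj' z₀
  rw [mul_comm] at hden
  unfold blaschkeFactor
  field_simp
  linear_combination (-z) * hsq

theorem norm_add_norm_mul_le (z₀ z : ℂ) : ‖z₀ + ‖z₀‖ * z‖ ≤ ‖z₀‖ * (1 + ‖z‖) := by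
  calc ‖z₀ + ‖z₀‖ * z‖ ≤ ‖z₀‖ + ‖(‖z₀‖ : ℂ) * z‖ := norm_add_le _ _
    _ = ‖z₀‖ * (1 + ‖z‖) := by rw [norm_mul, Complex.norm_real, norm_norm]; ring

theorem one_sub_norm_le_norm_one_sub_conj_mul {z₀ z : ℂ} (hz₀ : ‖z₀‖ ≤ 1) :
    1 - ‖z‖ ≤ ‖1 - conj z₀ * z‖ := by
  have hprod : ‖conj z₀ * z‖ ≤ ‖z‖ := by
    rw [norm_mul, Complex.norm_conj]
    exact mul_le_of_le_one_left (norm_nonneg z) hz₀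
  calc 1 - ‖z‖ ≤ ‖(1 : ℂ)‖ - ‖conj z₀ * z‖ := by rw [norm_one]; linarith
    _ ≤ ‖1 - conj z₀ * z‖ := norm_sub_norm_le _ _

theorem norm_one_sub_blaschkeFactor_le {z₀ z : ℂ} (hz₀ : ‖z₀‖ < 1) (hz₀ne : z₀ ≠ 0)
    (hz : ‖z‖ < 1) :
    ‖1 - blaschkeFactor z₀ z‖ ≤ (1 + ‖z‖) / (1 - ‖z‖) * (1 - ‖z₀‖) := by
  have hden := one_sub_conj_mul_ne_zero hz₀.le hz
  have hnorm₀ : 0 < ‖z₀‖ := norm_pos_iff.mpr hz₀ne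
  rw [one_sub_blaschkeFactor_eq hz₀ne hden, norm_div, norm_mul, norm_mul,
    show (1 : ℂ) - ‖z₀‖ = ((1 - ‖z₀‖ : ℝ) : ℂ) by push_cast; ring, Complex.norm_real,
    Real.norm_of_nonneg (by linarith)]
  calc (1 - ‖z₀‖) * ‖z₀ + ‖z₀‖ * z‖ / (‖z₀‖ * ‖1 - conj z₀ * z‖)
      ≤ (1 - ‖z₀‖) * (‖z₀‖ * (1 + ‖z‖)) / (‖z₀‖ * (1 - ‖z‖)) := by
        gcongr
        · exact norm_add_norm_mul_le z₀ z
        · exact one_sub_norm_le_norm_one_sub_conj_mul hz₀.le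
    _ = (1 + ‖z‖) / (1 - ‖z‖) * (1 - ‖z₀‖) := by
        field_simp [hnorm₀.ne', (sub_pos.mpr hz).ne']

theorem blaschke_factor_estimate_general (z₀ : ℂ) (hz₀ : z₀ ∈ Metric.ball (0 : ℂ) 1)
    (hz₀ne : z₀ ≠ 0) (r : ℝ) (hr1 : r < 1) (z : ℂ)
    (hz : ‖z‖ ≤ r) :
    ‖1 - (z₀ - z) / (1 - (starRingEnd ℂ) z₀ * z) * (((‖z₀‖ : ℝ) : ℂ) / z₀)‖ ≤
      (1 + r) / (1 - r) * (1 - ‖z₀‖) := by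
  have hnorm₀ : ‖z₀‖ < 1 := mem_ball_zero_iff.mp hz₀
  calc ‖1 - blaschkeFactor z₀ z‖ ≤ (1 + ‖z‖) / (1 - ‖z‖) * (1 - ‖z₀‖) :=
        norm_one_sub_blaschkeFactor_le hnorm₀ hz₀ne (hz.trans_lt hr1)
    _ ≤ (1 + r) / (1 - r) * (1 - ‖z₀‖) := by
        gcongr
        linarith [norm_nonneg z]

/-- Estimate for Blaschke factors: if `z₀ ∈ D`, `z₀ ≠ 0`, `|z| ≤ r < 1`, then
`|1 − β_{z₀}(z)| ≤ ((1+r)/(1−r))·(1 − |z₀|)`. -/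
theorem blaschke_factor_estimate (z₀ : ℂ) (hz₀ : z₀ ∈ Metric.ball (0 : ℂ) 1)
    (hz₀ne : z₀ ≠ 0) (r : ℝ) (hr0 : 0 ≤ r) (hr1 : r < 1) (z : ℂ)
    (hz : ‖z‖ ≤ r) :
    ‖1 - (z₀ - z) / (1 - (starRingEnd ℂ) z₀ * z) * (((‖z₀‖ : ℝ) : ℂ) / z₀)‖ ≤
      (1 + r) / (1 - r) * (1 - ‖z₀‖) :=
  blaschke_factor_estimate_general z₀ hz₀ hz₀ne r hr1 z hz
end

section
/- Let A : D → M_n(ℂ) be analytic and contractive (‖A(z)‖ ≤ 1 for all z in the open unit disk D). If A(z_0) is unitary for some z_0 ∈ D, then A is constant on D. -/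
/-!
Each column `w ↦ A w eᵢ` is a holomorphic map into the strictly convex space `ℂⁿ` whose norm is
at most `‖A w‖ ≤ 1`, and equals `1` at `z₀` because the columns of a unitary matrix are unit
vectors. By the maximum modulus principle for strictly convex codomains every column is constant.
-/

open scoped Matrix.Norms.L2Operator

namespace Matrix

variable {𝕜 m n : Type*} [RCLike 𝕜] [Fintype m] [Fintype n] [DecidableEq n]

theorem norm_toLp_col_le_l2_opNorm (M : Matrix m n 𝕜) (i : n) :
    ‖WithLp.toLp 2 (M.col i)‖ ≤ ‖M‖ := by
  simpa [mulVec_single_one, PiLp.norm_single] using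
    l2_opNorm_mulVec M (EuclideanSpace.single i 1)

theorem norm_toLp_col_of_mem_unitaryGroup {U : Matrix n n 𝕜} (hU : U ∈ unitaryGroup n 𝕜)
    (i : n) : ‖WithLp.toLp 2 (U.col i)‖ = 1 := by
  have hinner : inner 𝕜 (WithLp.toLp 2 (U.col i)) (WithLp.toLp 2 (U.col i)) = 1 := by
    simpa only [PiLp.inner_apply, RCLike.inner_apply, WithLp.ofLp_toLp, col_apply, mul_apply,
      star_apply, RCLike.star_def, one_apply_eq, mul_comm] using
      congrFun (congrFun (mem_unitaryGroup_iff'.1 hU) i) i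
  rw [← pow_eq_one_iff_of_nonneg (norm_nonneg _) two_ne_zero, ← inner_self_eq_norm_sq (𝕜 := 𝕜),
    hinner, RCLike.one_re]

end Matrix

/-- A contractive analytic matrix-valued function on the unit disk which is unitary at
some interior point is constant. -/
theorem contractive_unitary_at_point_constant (n : ℕ) (A : ℂ → Matrix (Fin n) (Fin n) ℂ)
    (hA : ∀ i j : Fin n, DifferentiableOn ℂ (fun z => A z i j) (Metric.ball (0 : ℂ) 1))
    (hcontr : ∀ z ∈ Metric.ball (0 : ℂ) 1, ‖A z‖ ≤ 1)
    (z₀ : ℂ) (hz₀ : z₀ ∈ Metric.ball (0 : ℂ) 1)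
    (hunit : A z₀ ∈ Matrix.unitaryGroup (Fin n) ℂ) :
    ∀ z ∈ Metric.ball (0 : ℂ) 1, A z = A z₀ := by
  intro z hz
  ext k i
  let col : ℂ → EuclideanSpace ℂ (Fin n) := fun w => WithLp.toLp 2 ((A w).col i)
  have hcol_diff : DifferentiableOn ℂ col (Metric.ball 0 1) :=
    differentiableOn_euclidean.2 fun k => hA k i
  have hcol_max : IsMaxOn (norm ∘ col) (Metric.ball 0 1) z₀ := fun w hw => by
    simpa [col, Matrix.norm_toLp_col_of_mem_unitaryGroup hunit i] using
      (Matrix.norm_toLp_col_le_l2_opNorm (A w) i).trans (hcontr w hw)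
  exact congrArg (· k) <| Complex.eqOn_of_isPreconnected_of_isMaxOn_norm
    (convex_ball 0 1).isPreconnected Metric.isOpen_ball hcol_diff hz₀ hcol_max hz
end

section
/- Let (f_k)_k ⊂ BV([a,b]) have total variations uniformly bounded by C and converge pointwise to f on [a,b]. Then f ∈ BV([a,b]) and for every continuous φ : [a,b] → ℝ, the Riemann–Stieltjes integrals converge: lim_{k→∞} ∫_a^b φ df_k = ∫_a^b φ df. -/
open Filter

/-- `J` is the Riemann–Stieltjes integral `∫_a^b φ df`: the Riemann–Stieltjes sums converge
to `J` as the mesh of the tagged partition tends to `0`. -/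
def IsRSIntegralR (φ f : ℝ → ℝ) (a b : ℝ) (J : ℝ) : Prop :=
  ∀ ε > (0 : ℝ), ∃ δ > (0 : ℝ), ∀ (m : ℕ) (t ξ : ℕ → ℝ), 0 < m →
    t 0 = a → t m = b →
    (∀ i < m, t i ≤ t (i + 1)) → (∀ i < m, t (i + 1) - t i < δ) →
    (∀ i < m, ξ i ∈ Set.Icc (t i) (t (i + 1))) →
    |(∑ i ∈ Finset.range m, φ (ξ i) * (f (t (i + 1)) - f (t i))) - J| < ε

/-!
Uniform continuity of `φ` on `[a, b]` and a variation bound `V` on the integrator give the classical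
estimate: Riemann–Stieltjes sums over two `δ`-fine tagged partitions differ by at most `2 ε' V`,
because both differ by at most `ε' V` from the sum over their common refinement. Hence the
integral `∫ φ df` exists for every `f` of variation at most `V`, and since `δ` depends only on
`φ`, `ε'` and `V`, one fixed fine partition `U` approximates `∫ φ df_k` uniformly in `k`. The sums
over `U` are finite combinations of values of `f_k`, so they converge to the sum for `g`, and
lower semicontinuity of the variation under pointwise convergence bounds the variation of `g`.
-/

open Finset
open scoped NNReal

theorem Finset.sum_range_sum_Ico {M : Type*} [AddCommMonoid M] (F : ℕ → M) {k : ℕ → ℕ}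
    (hk : Monotone k) (m : ℕ) :
    ∑ i ∈ range m, ∑ j ∈ Ico (k i) (k (i + 1)), F j = ∑ j ∈ Ico (k 0) (k m), F j := by
  induction m with
  | zero => simp
  | succ m ih =>
    rw [sum_range_succ, ih, sum_Ico_consecutive _ (hk (Nat.zero_le m)) (hk m.le_succ)]

theorem eVariationOn.le_of_tendsto {α E ι : Type*} [LinearOrder α] [PseudoEMetricSpace E]
    {l : Filter ι} [l.NeBot] {F : ι → α → E} {f : α → E} {s : Set α}
    (hF : ∀ x ∈ s, Tendsto (fun i => F i x) l (nhds (f x))) {v : ENNReal}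
    (hv : ∀ᶠ i in l, eVariationOn (F i) s ≤ v) : eVariationOn f s ≤ v :=
  not_lt.1 fun h => ((eVariationOn.lowerSemicontinuous_aux hF h).and hv).exists.elim
    fun _ hi => hi.2.not_gt hi.1

namespace RiemannStieltjes

structure IsPartition (a b : ℝ) (m : ℕ) (t : ℕ → ℝ) : Prop where
  zero : t 0 = a
  last : t m = b
  le_succ : ∀ i < m, t i ≤ t (i + 1)

structure IsFineTaggedPartition (a b δ : ℝ) (m : ℕ) (t ξ : ℕ → ℝ) : Prop
    extends IsPartition a b m t where
  mesh_lt : ∀ i < m, t (i + 1) - t i < δ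
  tag_mem : ∀ i < m, ξ i ∈ Set.Icc (t i) (t (i + 1))

def rsSum (φ f : ℝ → ℝ) (m : ℕ) (t ξ : ℕ → ℝ) : ℝ :=
  ∑ i ∈ range m, φ (ξ i) * (f (t (i + 1)) - f (t i))

def IsRefinement (n : ℕ) (s : ℕ → ℝ) (m : ℕ) (t : ℕ → ℝ) : Prop :=
  ∃ k : ℕ → ℕ, Monotone k ∧ k 0 = 0 ∧ k m = n ∧ ∀ i ≤ m, s (k i) = t i

def RSSumsClose (φ f : ℝ → ℝ) (a b δ ε : ℝ) : Prop :=
  ∀ (m₁ : ℕ) (t₁ ξ₁ : ℕ → ℝ) (m₂ : ℕ) (t₂ ξ₂ : ℕ → ℝ),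
    IsFineTaggedPartition a b δ m₁ t₁ ξ₁ → IsFineTaggedPartition a b δ m₂ t₂ ξ₂ →
      |rsSum φ f m₁ t₁ ξ₁ - rsSum φ f m₂ t₂ ξ₂| ≤ ε

theorem isRSIntegralR_iff {φ f : ℝ → ℝ} {a b J : ℝ} :
    IsRSIntegralR φ f a b J ↔ ∀ ε > 0, ∃ δ > 0, ∀ (m : ℕ) (t ξ : ℕ → ℝ), 0 < m →
      IsFineTaggedPartition a b δ m t ξ → |rsSum φ f m t ξ - J| < ε := by
  refine forall₂_congr fun ε _ => exists_congr fun δ => and_congr_right fun _ => ?_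
  exact forall₃_congr fun m t ξ => imp_congr_right fun _ =>
    ⟨fun h P => h P.zero P.last P.le_succ P.mesh_lt P.tag_mem,
      fun h h0 hm hle hmesh htag => h ⟨⟨h0, hm, hle⟩, hmesh, htag⟩⟩

namespace IsPartition

variable {a b : ℝ} {m : ℕ} {t : ℕ → ℝ}

theorem monotoneOn (P : IsPartition a b m t) : MonotoneOn t (Set.Iic m) :=
  monotoneOn_of_le_succ Set.ordConnected_Iic fun i _ _ hi => by
    simpa [Order.succ_eq_add_one] using P.le_succ i (by simpa [Order.succ_eq_add_one] using hi)

theorem mem_Icc (P : IsPartition a b m t) {i : ℕ} (hi : i ≤ m) : t i ∈ Set.Icc a b :=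
  ⟨P.zero ▸ P.monotoneOn (Nat.zero_le m) hi (Nat.zero_le i),
    P.last ▸ P.monotoneOn hi Set.self_mem_Iic hi⟩

theorem sum_abs_sub_le (P : IsPartition a b m t) {f : ℝ → ℝ} {V : ℝ≥0}
    (hf : eVariationOn f (Set.Icc a b) ≤ V) :
    ∑ i ∈ range m, |f (t (i + 1)) - f (t i)| ≤ V := by
  have h := (eVariationOn.sum_le_of_monotoneOn_Iic P.monotoneOn fun i hi => P.mem_Icc hi).trans hf
  simp only [edist_dist, Real.dist_eq] at h
  rw [← ENNReal.ofReal_sum_of_nonneg fun i _ => abs_nonneg _, ← ENNReal.ofReal_coe_nnreal] at h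
  exact (ENNReal.ofReal_le_ofReal_iff V.2).1 h

end IsPartition

theorem IsFineTaggedPartition.dist_apply_le {φ : ℝ → ℝ} {a b δ ε : ℝ} {m : ℕ} {t ξ : ℕ → ℝ}
    (P : IsFineTaggedPartition a b δ m t ξ)
    (hφ : ∀ x ∈ Set.Icc a b, ∀ y ∈ Set.Icc a b, dist x y ≤ δ → dist (φ x) (φ y) ≤ ε)
    {i : ℕ} (hi : i < m) {x y : ℝ} (hx : x ∈ Set.Icc (t i) (t (i + 1)))
    (hy : y ∈ Set.Icc (t i) (t (i + 1))) : dist (φ x) (φ y) ≤ ε := by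
  have hsub : Set.Icc (t i) (t (i + 1)) ⊆ Set.Icc a b :=
    Set.Icc_subset_Icc (P.mem_Icc hi.le).1 (P.mem_Icc hi).2
  exact hφ x (hsub hx) y (hsub hy) ((Real.dist_le_of_mem_Icc hx hy).trans (P.mesh_lt i hi).le)

theorem abs_rsSum_sub_rsSum_le_of_isRefinement {φ f : ℝ → ℝ} {a b δ ε : ℝ} {m n : ℕ}
    {t ξ s : ℕ → ℝ} (P : IsFineTaggedPartition a b δ m t ξ) (hs : MonotoneOn s (Set.Iic n))
    (hst : IsRefinement n s m t)
    (hφ : ∀ x ∈ Set.Icc a b, ∀ y ∈ Set.Icc a b, dist x y ≤ δ → dist (φ x) (φ y) ≤ ε) :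
    |rsSum φ f n s s - rsSum φ f m t ξ| ≤ ε * ∑ j ∈ range n, |f (s (j + 1)) - f (s j)| := by
  obtain ⟨k, hk, hk0, hkm, hks⟩ := hst
  have blocks (F : ℕ → ℝ) :
      ∑ j ∈ range n, F j = ∑ i ∈ range m, ∑ j ∈ Ico (k i) (k (i + 1)), F j := by
    rw [sum_range_sum_Ico F hk, hk0, hkm, range_eq_Ico]
  have hsum_t : rsSum φ f m t ξ = ∑ i ∈ range m, ∑ j ∈ Ico (k i) (k (i + 1)),
      φ (ξ i) * (f (s (j + 1)) - f (s j)) := by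
    refine sum_congr rfl fun i hi => ?_
    rw [← mul_sum, sum_Ico_sub (fun j => f (s j)) (hk i.le_succ), hks i (mem_range.1 hi).le,
      hks (i + 1) (mem_range.1 hi)]
  have hs_mem {i j : ℕ} (hi : i < m) (hj : j ∈ Ico (k i) (k (i + 1))) :
      s j ∈ Set.Icc (t i) (t (i + 1)) := by
    obtain ⟨hij, hji⟩ := mem_Ico.1 hj
    have hkn : k (i + 1) ≤ n := hkm ▸ hk hi
    rw [← hks i hi.le, ← hks (i + 1) hi]
    exact ⟨hs (hij.trans (hji.le.trans hkn)) (hji.le.trans hkn) hij,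
      hs (hji.le.trans hkn) hkn hji.le⟩
  rw [rsSum, blocks, hsum_t, blocks, mul_sum, ← sum_sub_distrib]
  refine (abs_sum_le_sum_abs _ _).trans (sum_le_sum fun i hi => ?_)
  rw [← sum_sub_distrib, mul_sum]
  refine (abs_sum_le_sum_abs _ _).trans (sum_le_sum fun j hj => ?_)
  rw [← sub_mul, abs_mul, ← Real.dist_eq]
  exact mul_le_mul_of_nonneg_right
    (P.dist_apply_le hφ (mem_range.1 hi) (hs_mem (mem_range.1 hi) hj)
      (P.tag_mem i (mem_range.1 hi))) (abs_nonneg _)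

theorem exists_isPartition_isRefinement {a b : ℝ} (T : Finset ℝ) (ha : a ∈ T) (hb : b ∈ T)
    (hT : ∀ x ∈ T, x ∈ Set.Icc a b) :
    ∃ (n : ℕ) (s : ℕ → ℝ), IsPartition a b n s ∧ ∀ (m : ℕ) (t : ℕ → ℝ),
      IsPartition a b m t → (∀ i ≤ m, t i ∈ T) → IsRefinement n s m t := by
  set e := T.orderIsoOfFin rfl
  have hcard : 0 < T.card := card_pos.2 ⟨a, ha⟩
  set n := T.card - 1
  -- `s` lists `T` in increasing order, frozen at its maximum after index `n`
  let s : ℕ → ℝ := fun j => e ⟨min j n, by omega⟩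
  have hs_mono : Monotone s := fun i j hij => e.monotone (Fin.mk_le_mk.2 (min_le_min_right n hij))
  have hs_mem (j : ℕ) : s j ∈ T := (e _).2
  have hs_symm (x : ℝ) (hx : x ∈ T) : s (e.symm ⟨x, hx⟩) = x := by
    have : (e.symm ⟨x, hx⟩ : ℕ) ≤ n := Nat.le_sub_one_of_lt (e.symm _).2
    simp [s, min_eq_left this]
  have hs0 : s 0 = a := le_antisymm (hs_symm a ha ▸ hs_mono (Nat.zero_le _)) (hT _ (hs_mem 0)).1
  have hsn : s n = b :=
    le_antisymm (hT _ (hs_mem n)).2 (hs_symm b hb ▸ hs_mono (Nat.le_sub_one_of_lt (e.symm _).2))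
  refine ⟨n, s, ⟨hs0, hsn, fun i _ => hs_mono i.le_succ⟩, fun m t P ht => ?_⟩
  have hidx {x : ℝ} (hx : x ∈ T) {j : ℕ} (hj : j ≤ n) (h : s j = x) : (e.symm ⟨x, hx⟩ : ℕ) = j := by
    have : e.symm ⟨x, hx⟩ = ⟨j, by omega⟩ :=
      e.symm_apply_eq.2 (Subtype.ext (h.symm.trans (by simp [s, min_eq_left hj])))
    rw [this]
  refine ⟨fun i => e.symm ⟨t (min i m), ht _ (min_le_right i m)⟩, fun i j hij => ?_,
    hidx _ (Nat.zero_le n) (by simpa [P.zero] using hs0),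
    hidx _ le_rfl (by simpa [P.last] using hsn),
    fun i hi => by simpa [min_eq_left hi] using hs_symm _ (ht i hi)⟩
  exact e.symm.monotone (Subtype.mk_le_mk.2 (P.monotoneOn (min_le_right i m) (min_le_right j m)
    (min_le_min_right m hij)))

theorem IsPartition.exists_common_refinement {a b : ℝ} {m₁ m₂ : ℕ} {t₁ t₂ : ℕ → ℝ}
    (P₁ : IsPartition a b m₁ t₁) (P₂ : IsPartition a b m₂ t₂) :
    ∃ (n : ℕ) (s : ℕ → ℝ), IsPartition a b n s ∧ IsRefinement n s m₁ t₁ ∧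
      IsRefinement n s m₂ t₂ := by
  let T := (range (m₁ + 1)).image t₁ ∪ (range (m₂ + 1)).image t₂
  have ht₁ (i : ℕ) (hi : i ≤ m₁) : t₁ i ∈ T :=
    mem_union_left _ (mem_image_of_mem t₁ (mem_range.2 (Nat.lt_succ_of_le hi)))
  have ht₂ (i : ℕ) (hi : i ≤ m₂) : t₂ i ∈ T :=
    mem_union_right _ (mem_image_of_mem t₂ (mem_range.2 (Nat.lt_succ_of_le hi)))
  have hT (x : ℝ) (hx : x ∈ T) : x ∈ Set.Icc a b := by
    simp only [T, mem_union, mem_image, mem_range, Nat.lt_succ_iff] at hx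
    rcases hx with ⟨i, hi, rfl⟩ | ⟨i, hi, rfl⟩
    exacts [P₁.mem_Icc hi, P₂.mem_Icc hi]
  obtain ⟨n, s, hs, href⟩ :=
    exists_isPartition_isRefinement T (P₁.zero ▸ ht₁ 0 (Nat.zero_le _))
      (P₁.last ▸ ht₁ m₁ le_rfl) hT
  exact ⟨n, s, hs, href m₁ t₁ P₁ ht₁, href m₂ t₂ P₂ ht₂⟩

theorem exists_pos_forall_rsSumsClose {φ : ℝ → ℝ} {a b : ℝ} (hφ : ContinuousOn φ (Set.Icc a b))
    (V : ℝ≥0) {ε : ℝ} (hε : 0 < ε) :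
    ∃ δ > 0, ∀ f : ℝ → ℝ, eVariationOn f (Set.Icc a b) ≤ V → RSSumsClose φ f a b δ ε := by
  set ε' := ε / (2 * (V + 1))
  have hε' : 0 < ε' := by positivity
  have hε'V : ε' * V + ε' * V ≤ ε := by
    have : ε' * (2 * (V + 1)) = ε := div_mul_cancel₀ ε (by positivity)
    nlinarith
  obtain ⟨δ, hδ, hosc⟩ :=
    Metric.uniformContinuousOn_iff_le.1 (isCompact_Icc.uniformContinuousOn_of_continuous hφ) ε' hε'
  refine ⟨δ, hδ, fun f hf m₁ t₁ ξ₁ m₂ t₂ ξ₂ P₁ P₂ => ?_⟩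
  obtain ⟨n, s, Q, hQ₁, hQ₂⟩ := P₁.exists_common_refinement P₂.toIsPartition
  have hQ {m : ℕ} {t ξ : ℕ → ℝ} (P : IsFineTaggedPartition a b δ m t ξ)
      (hst : IsRefinement n s m t) :
      |rsSum φ f n s s - rsSum φ f m t ξ| ≤ ε' * V :=
    (abs_rsSum_sub_rsSum_le_of_isRefinement P Q.monotoneOn hst hosc).trans
      (mul_le_mul_of_nonneg_left (Q.sum_abs_sub_le hf) hε'.le)
  calc |rsSum φ f m₁ t₁ ξ₁ - rsSum φ f m₂ t₂ ξ₂|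
      ≤ |rsSum φ f n s s - rsSum φ f m₁ t₁ ξ₁| + |rsSum φ f n s s - rsSum φ f m₂ t₂ ξ₂| :=
        by rw [abs_sub_comm (rsSum φ f n s s)]; exact abs_sub_le _ _ _
    _ ≤ ε := (add_le_add (hQ P₁ hQ₁) (hQ P₂ hQ₂)).trans hε'V

noncomputable def uniformPartition (a b : ℝ) (N j : ℕ) : ℝ := a + j * ((b - a) / N)

theorem eventually_isFineTaggedPartition_uniformPartition {a b δ : ℝ} (hab : a ≤ b)
    (hδ : 0 < δ) : ∀ᶠ N in atTop, 0 < N ∧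
      IsFineTaggedPartition a b δ N (uniformPartition a b N) (uniformPartition a b N) := by
  have hmesh : ∀ᶠ N : ℕ in atTop, (b - a) / N < δ :=
    (tendsto_order.1 (tendsto_const_div_atTop_nhds_zero_nat (b - a))).2 δ hδ
  filter_upwards [eventually_gt_atTop 0, hmesh] with N hN hmesh
  have hstep (i : ℕ) : uniformPartition a b N (i + 1) - uniformPartition a b N i = (b - a) / N := by
    simp only [uniformPartition]; push_cast; ring
  have hle (i : ℕ) : uniformPartition a b N i ≤ uniformPartition a b N (i + 1) :=
    sub_nonneg.1 ((hstep i).symm ▸ div_nonneg (sub_nonneg.2 hab) N.cast_nonneg)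
  refine ⟨hN, ⟨⟨by simp [uniformPartition], ?_, fun i _ => hle i⟩,
    fun i _ => (hstep i).symm ▸ hmesh, fun i _ => ⟨le_rfl, hle i⟩⟩⟩
  simp only [uniformPartition]
  field_simp
  ring

theorem exists_isRSIntegralR {φ f : ℝ → ℝ} {a b : ℝ} (hab : a ≤ b)
    (hφ : ContinuousOn φ (Set.Icc a b)) {V : ℝ≥0} (hf : eVariationOn f (Set.Icc a b) ≤ V) :
    ∃ J, IsRSIntegralR φ f a b J := by
  let A (N : ℕ) := rsSum φ f N (uniformPartition a b N) (uniformPartition a b N)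
  have hA {ε : ℝ} (hε : 0 < ε) : ∃ δ > 0, ∀ᶠ N in atTop,
      IsFineTaggedPartition a b δ N (uniformPartition a b N) (uniformPartition a b N) ∧
        ∀ (m : ℕ) (t ξ : ℕ → ℝ), IsFineTaggedPartition a b δ m t ξ →
          |rsSum φ f m t ξ - A N| ≤ ε := by
    obtain ⟨δ, hδ, hclose⟩ := exists_pos_forall_rsSumsClose hφ V hε
    exact ⟨δ, hδ, (eventually_isFineTaggedPartition_uniformPartition hab hδ).mono
      fun N hN => ⟨hN.2, fun m t ξ P => hclose f hf _ _ _ _ _ _ P hN.2⟩⟩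
  have hcauchy : CauchySeq A := Metric.cauchySeq_iff'.2 fun ε hε => by
    obtain ⟨δ, -, hN⟩ := hA (half_pos hε)
    obtain ⟨N₀, hN₀⟩ := eventually_atTop.1 hN
    exact ⟨N₀, fun N hN => (Real.dist_eq _ _ ▸ (hN₀ N₀ le_rfl).2 _ _ _ (hN₀ N hN).1).trans_lt
      (half_lt_self hε)⟩
  obtain ⟨J, hJ⟩ := cauchySeq_tendsto_of_complete hcauchy
  refine ⟨J, isRSIntegralR_iff.2 fun ε hε => ?_⟩
  obtain ⟨δ, hδ, hN⟩ := hA (half_pos hε)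
  refine ⟨δ, hδ, fun m t ξ _ P => ?_⟩
  exact (le_of_tendsto (tendsto_const_nhds.sub hJ).abs (hN.mono fun N h => h.2 m t ξ P)).trans_lt
    (half_lt_self hε)

theorem _root_.IsRSIntegralR.abs_rsSum_sub_le {φ f : ℝ → ℝ} {a b J δ ε : ℝ}
    (hJ : IsRSIntegralR φ f a b J) (hab : a ≤ b) (hclose : RSSumsClose φ f a b δ ε) (hδ : 0 < δ)
    {m : ℕ} {t ξ : ℕ → ℝ} (P : IsFineTaggedPartition a b δ m t ξ) :
    |rsSum φ f m t ξ - J| ≤ ε := by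
  refine le_of_forall_pos_lt_add fun η hη => ?_
  obtain ⟨δ', hδ', hJδ'⟩ := isRSIntegralR_iff.1 hJ η hη
  obtain ⟨N, ⟨hN, hU⟩, -, hU'⟩ := ((eventually_isFineTaggedPartition_uniformPartition hab hδ).and
    (eventually_isFineTaggedPartition_uniformPartition hab hδ')).exists
  calc |rsSum φ f m t ξ - J|
      ≤ |rsSum φ f m t ξ - rsSum φ f N (uniformPartition a b N) (uniformPartition a b N)|
        + |rsSum φ f N (uniformPartition a b N) (uniformPartition a b N) - J| := abs_sub_le _ _ _
    _ < ε + η := add_lt_add_of_le_of_lt (hclose _ _ _ _ _ _ P hU) (hJδ' N _ _ hN hU')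

theorem tendsto_rsSum {ι : Type*} {l : Filter ι} {φ g : ℝ → ℝ} {F : ι → ℝ → ℝ} {a b : ℝ}
    (hF : ∀ x ∈ Set.Icc a b, Tendsto (fun k => F k x) l (nhds (g x)))
    {m : ℕ} {t : ℕ → ℝ} (P : IsPartition a b m t) (ξ : ℕ → ℝ) :
    Tendsto (fun k => rsSum φ (F k) m t ξ) l (nhds (rsSum φ g m t ξ)) :=
  tendsto_finsetSum _ fun _ hi =>
    ((hF _ (P.mem_Icc (mem_range.1 hi))).sub (hF _ (P.mem_Icc (mem_range.1 hi).le))).const_mul _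

end RiemannStieltjes

open RiemannStieltjes in
/-- Helly's convergence theorem (scalar version): if `(f_k)` have total variation uniformly
bounded by `C` and converge pointwise to `f` on `[a,b]`, then `f` has bounded variation and
`∫_a^b φ df_k → ∫_a^b φ df` for every continuous `φ`. -/
theorem helly_convergence_scalar (a b : ℝ) (hab : a ≤ b) (f : ℕ → ℝ → ℝ) (C : ℝ)
    (hvar : ∀ k, eVariationOn (f k) (Set.Icc a b) ≤ ENNReal.ofReal C)
    (g : ℝ → ℝ)
    (hconv : ∀ t ∈ Set.Icc a b, Tendsto (fun k => f k t) atTop (nhds (g t))) :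
    BoundedVariationOn g (Set.Icc a b) ∧
    ∀ φ : ℝ → ℝ, ContinuousOn φ (Set.Icc a b) →
      ∃ J : ℝ, IsRSIntegralR φ g a b J ∧
        ∀ I : ℕ → ℝ, (∀ k, IsRSIntegralR φ (f k) a b (I k)) →
          Tendsto I atTop (nhds J) := by
  have hg : eVariationOn g (Set.Icc a b) ≤ ENNReal.ofReal C :=
    eVariationOn.le_of_tendsto hconv (.of_forall hvar)
  refine ⟨ne_top_of_le_ne_top ENNReal.ofReal_ne_top hg, fun φ hφ => ?_⟩
  obtain ⟨J, hJ⟩ := exists_isRSIntegralR hab hφ hg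
  refine ⟨J, hJ, fun I hI => Metric.tendsto_atTop.2 fun ε hε => ?_⟩
  obtain ⟨δ, hδ, hclose⟩ := exists_pos_forall_rsSumsClose hφ C.toNNReal (ε := ε / 3) (by positivity)
  obtain ⟨N, -, hU⟩ := (eventually_isFineTaggedPartition_uniformPartition hab hδ).exists
  let S (h : ℝ → ℝ) := rsSum φ h N (uniformPartition a b N) (uniformPartition a b N)
  obtain ⟨K, hK⟩ := Metric.tendsto_atTop.1 (tendsto_rsSum hconv hU.toIsPartition _ (φ := φ))
    (ε / 3) (by positivity)
  refine ⟨K, fun k hk => ?_⟩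
  have hk₁ : |S (f k) - I k| ≤ ε / 3 := (hI k).abs_rsSum_sub_le hab (hclose _ (hvar k)) hδ hU
  have hk₂ : |S g - J| ≤ ε / 3 := hJ.abs_rsSum_sub_le hab (hclose _ hg) hδ hU
  have hk₃ : |S (f k) - S g| < ε / 3 := hK k hk
  rw [Real.dist_eq]
  calc |I k - J| ≤ |I k - S (f k)| + (|S (f k) - S g| + |S g - J|) :=
        (abs_sub_le _ _ _).trans (add_le_add_right (abs_sub_le _ _ _) _)
    _ < ε := by rw [abs_sub_comm]; linarith
end
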